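/- Let V = (ℤ/p^nℤ)^{2d}, G ≤ GL_{2d}(ℤ/p^nℤ), and let H be the normal subgroup of G of elements acting as the identity on V[p]. Suppose G contains δ with δ − Id bijective on V, and H¹(G/H, V[p]) = 0. Then the restriction map H¹(G, V) → H¹(H, V) is injective; in particular any cocycle Z : G → V whose restriction to H is a coboundary is itself a coboundary. -/
import Mathlib


/-- The natural action of an element of `GL_{2d}(ℤ/p^nℤ)` on `(ℤ/p^nℤ)^{2d}`. -/
def mact {p n d : ℕ} (g : Matrix.GeneralLinearGroup (Fin (2*d)) (ZMod (p^n)))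
    (v : Fin (2*d) → ZMod (p^n)) : Fin (2*d) → ZMod (p^n) :=
  Matrix.mulVec (g : Matrix (Fin (2*d)) (Fin (2*d)) (ZMod (p^n))) v

section helpers

variable {p n d : ℕ}

lemma mact_mul (g h : Matrix.GeneralLinearGroup (Fin (2*d)) (ZMod (p^n)))
    (v : Fin (2*d) → ZMod (p^n)) : mact (g*h) v = mact g (mact h v) := by
  simp [mact, Matrix.mulVec_mulVec]

lemma mact_add (g : Matrix.GeneralLinearGroup (Fin (2*d)) (ZMod (p^n)))
    (v w : Fin (2*d) → ZMod (p^n)) : mact g (v + w) = mact g v + mact g w := by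
  simp [mact, Matrix.mulVec_add]

lemma mact_sub (g : Matrix.GeneralLinearGroup (Fin (2*d)) (ZMod (p^n)))
    (v w : Fin (2*d) → ZMod (p^n)) : mact g (v - w) = mact g v - mact g w := by
  simp [mact, Matrix.mulVec_sub]

lemma mact_zero (g : Matrix.GeneralLinearGroup (Fin (2*d)) (ZMod (p^n))) :
    mact g (0 : Fin (2*d) → ZMod (p^n)) = 0 := by
  simp [mact]

lemma mact_nsmul (g : Matrix.GeneralLinearGroup (Fin (2*d)) (ZMod (p^n)))
    (m : ℕ) (v : Fin (2*d) → ZMod (p^n)) : mact g (m • v) = m • mact g v := by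
  induction m with
  | zero => simp [mact_zero]
  | succ m ih => rw [succ_nsmul, succ_nsmul, mact_add, ih]

end helpers

theorem stmt_6 (p n d : ℕ) (hp : p.Prime) (hn : 0 < n) (hd : 0 < d)
    (G : Subgroup (Matrix.GeneralLinearGroup (Fin (2*d)) (ZMod (p^n))))
    -- `H` is the (normal) subgroup of `G` of elements acting as the identity on `V[p]`:
    (H : Subgroup G)
    (hHdef : ∀ g : G, g ∈ H ↔
      ∀ v : Fin (2*d) → ZMod (p^n), p • v = 0 → mact g.1 v = v)
    (δ : G)
    (hδ : Function.Bijective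
      (fun v : Fin (2*d) → ZMod (p^n) => mact δ.1 v - v))
    -- `H¹(G/H, V[p]) = 0`, expressed via inflation: every `V[p]`-valued cocycle
    -- vanishing on `H` is a coboundary of an element of `V[p]`:
    (hquot : ∀ Z : G → (Fin (2*d) → ZMod (p^n)),
      (∀ a b : G, Z (a*b) = Z a + mact a.1 (Z b)) →
      (∀ a : G, p • Z a = 0) →
      (∀ h : G, h ∈ H → Z h = 0) →
      ∃ w : Fin (2*d) → ZMod (p^n), p • w = 0 ∧ ∀ a : G, Z a = mact a.1 w - w)
    -- a cocycle `Z : G → V` whose restriction to `H` is a coboundary: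
    (Z : G → (Fin (2*d) → ZMod (p^n)))
    (hZ : ∀ a b : G, Z (a*b) = Z a + mact a.1 (Z b))
    (hZH : ∃ v : Fin (2*d) → ZMod (p^n), ∀ h : G, h ∈ H → Z h = mact h.1 v - v) :
    ∃ v : Fin (2*d) → ZMod (p^n), ∀ a : G, Z a = mact a.1 v - v := by
  haveI : NeZero (p ^ n) := ⟨pow_ne_zero n hp.ne_zero⟩
  -- coercion of products in G is definitional
  have hcoe : ∀ a b : G, ((a * b : G) : Matrix.GeneralLinearGroup (Fin (2*d)) (ZMod (p^n)))
      = a.1 * b.1 := fun a b => rfl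
  -- action of a product of two elements of G
  have hmactG : ∀ (a b : G) (v : Fin (2*d) → ZMod (p^n)),
      mact (a*b).1 v = mact a.1 (mact b.1 v) := by
    intro a b v
    rw [hcoe, mact_mul]
  -- H is closed under conjugation
  have hconj : ∀ a h : G, h ∈ H → a⁻¹ * h * a ∈ H := by
    intro a h hh
    rw [hHdef]
    intro v hv
    have h1 : mact ((a⁻¹ * h * a : G) : Matrix.GeneralLinearGroup (Fin (2*d)) (ZMod (p^n))) v
        = mact a⁻¹.1 (mact h.1 (mact a.1 v)) := by
      rw [show a⁻¹ * h * a = a⁻¹ * (h * a) by group, hmactG, hmactG]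
    have h2 : p • mact a.1 v = 0 := by rw [← mact_nsmul, hv, mact_zero]
    rw [h1, (hHdef h).mp hh _ h2, ← hmactG]
    rw [show a⁻¹ * a = (1 : G) by group]
    have : ((1 : G) : Matrix.GeneralLinearGroup (Fin (2*d)) (ZMod (p^n))) = 1 := rfl
    rw [this]
    simp [mact]
  -- the set of H-fixed vectors
  set W : Set (Fin (2*d) → ZMod (p^n)) := {x | ∀ h : G, h ∈ H → mact h.1 x = x} with hWdef
  have hWmem : ∀ x, x ∈ W ↔ ∀ h : G, h ∈ H → mact h.1 x = x := fun x => Iff.rfl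
  have hWsub : ∀ x y, x ∈ W → y ∈ W → x - y ∈ W := by
    intro x y hx hy
    rw [hWmem]
    intro h hh
    rw [mact_sub, (hWmem x).mp hx h hh, (hWmem y).mp hy h hh]
  have hWadd : ∀ x y, x ∈ W → y ∈ W → x + y ∈ W := by
    intro x y hx hy
    rw [hWmem]
    intro h hh
    rw [mact_add, (hWmem x).mp hx h hh, (hWmem y).mp hy h hh]
  have hWstab : ∀ (a : G) x, x ∈ W → mact a.1 x ∈ W := by
    intro a x hx
    rw [hWmem]
    intro h hh
    have e : h * a = a * (a⁻¹ * h * a) := by group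
    calc mact h.1 (mact a.1 x) = mact (h * a).1 x := (hmactG h a x).symm
      _ = mact (a * (a⁻¹ * h * a)).1 x := by rw [← e]
      _ = mact a.1 (mact (a⁻¹ * h * a).1 x) := hmactG _ _ _
      _ = mact a.1 x := by rw [(hWmem x).mp hx _ (hconj a h hh)]
  -- twisting a cocycle by a coboundary gives a cocycle
  have twist : ∀ (Y : G → (Fin (2*d) → ZMod (p^n))) (v : Fin (2*d) → ZMod (p^n)),
      (∀ a b : G, Y (a*b) = Y a + mact a.1 (Y b)) →
      ∀ a b : G, Y (a*b) - (mact (a*b).1 v - v)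
        = (Y a - (mact a.1 v - v)) + mact a.1 (Y b - (mact b.1 v - v)) := by
    intro Y v hY a b
    rw [hY, hmactG, mact_sub, mact_sub]
    abel
  -- key induction: cocycles vanishing on H with values in p^k • W are coboundaries of p^k • W
  have key : ∀ j k : ℕ, k + j = n →
      ∀ Y : G → (Fin (2*d) → ZMod (p^n)),
        (∀ a b : G, Y (a*b) = Y a + mact a.1 (Y b)) →
        (∀ h : G, h ∈ H → Y h = 0) →
        (∀ a : G, ∃ y ∈ W, Y a = p^k • y) →
        ∃ v, (∃ y ∈ W, v = p^k • y) ∧ ∀ a : G, Y a = mact a.1 v - v := by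
    intro j
    induction j with
    | zero =>
      intro k hk Y hYc hYH hYval
      refine ⟨0, ⟨0, ?_, by simp⟩, ?_⟩
      · rw [hWmem]; intro h hh; rw [mact_zero]
      · intro a
        obtain ⟨y, _, hy⟩ := hYval a
        have hzero : (p ^ k : ℕ) • y = 0 := by
          have hk' : k = n := by omega
          rw [hk', ← Nat.cast_smul_eq_nsmul (ZMod (p^n)), ZMod.natCast_self, zero_smul]
        rw [hy, hzero, mact_zero, sub_zero]
    | succ j ih =>
      intro k hk Y hYc hYH hYval
      -- apply IH to p • Y
      obtain ⟨u, ⟨yu, hyuW, hyu⟩, hu⟩ := ih (k+1) (by omega) (fun a => p • Y a)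
        (by
          intro a b
          show p • Y (a*b) = p • Y a + mact a.1 (p • Y b)
          rw [hYc, smul_add, mact_nsmul])
        (by
          intro h hh
          show p • Y h = 0
          rw [hYH h hh, smul_zero])
        (by
          intro a
          obtain ⟨y, hyW, hy⟩ := hYval a
          refine ⟨y, hyW, ?_⟩
          show p • Y a = p^(k+1) • y
          rw [hy, smul_smul, ← pow_succ'])
      have hu' : ∀ a : G, p • Y a = mact a.1 u - u := fun a => hu a
      have hu₀W : (p^k • yu : Fin (2*d) → ZMod (p^n)) ∈ W := by
        rw [hWmem]
        intro h hh
        rw [mact_nsmul, (hWmem yu).mp hyuW h hh]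
      set u₀ : Fin (2*d) → ZMod (p^n) := p^k • yu with hu₀
      have hupu₀ : u = p • u₀ := by
        rw [hyu, hu₀, smul_smul, ← pow_succ']
      -- the twisted cocycle
      set Y' : G → (Fin (2*d) → ZMod (p^n)) := fun a => Y a - (mact a.1 u₀ - u₀) with hY'
      have hY'a : ∀ a : G, Y' a = Y a - (mact a.1 u₀ - u₀) := fun a => rfl
      have hY'c : ∀ a b : G, Y' (a*b) = Y' a + mact a.1 (Y' b) := by
        intro a b
        rw [hY'a, hY'a, hY'a]
        exact twist Y u₀ hYc a b
      have hY'H : ∀ h : G, h ∈ H → Y' h = 0 := by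
        intro h hh
        rw [hY'a, hYH h hh, (hWmem u₀).mp hu₀W h hh]
        abel
      have hY'tor : ∀ a : G, p • Y' a = 0 := by
        intro a
        rw [hY'a, smul_sub, smul_sub, hu' a, ← mact_nsmul, ← hupu₀]
        abel
      obtain ⟨w, hwtor, hw⟩ := hquot Y' hY'c hY'tor hY'H
      -- Y' has values in p^k • W
      have hY'val : ∀ a : G, ∃ y ∈ W, Y' a = p^k • y := by
        intro a
        obtain ⟨y, hyW, hy⟩ := hYval a
        refine ⟨y - (mact a.1 yu - yu), ?_, ?_⟩
        · exact hWsub _ _ hyW (hWsub _ _ (hWstab a yu hyuW) hyuW)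
        · rw [hY'a, hy, hu₀, smul_sub, smul_sub, mact_nsmul]
      -- the set U = (p^k • W) ∩ V[p] is finite, G-stable; δ - 1 is bijective on it
      set U : Set (Fin (2*d) → ZMod (p^n)) :=
        {x | (∃ y ∈ W, x = p^k • y) ∧ p • x = 0} with hU
      have hUmap : Set.MapsTo (fun v => mact δ.1 v - v) U U := by
        rintro x ⟨⟨y, hyW, hy⟩, hxt⟩
        constructor
        · refine ⟨mact δ.1 y - y, hWsub _ _ (hWstab δ y hyW) hyW, ?_⟩
          show mact δ.1 x - x = p^k • (mact δ.1 y - y)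
          rw [hy, smul_sub, mact_nsmul]
        · show p • (mact δ.1 x - x) = 0
          rw [smul_sub, ← mact_nsmul, hxt, mact_zero, sub_zero]
      have hUinj : Set.InjOn (fun v => mact δ.1 v - v) U := fun x _ y _ hxy => hδ.1 hxy
      have hUsurj : Set.SurjOn (fun v => mact δ.1 v - v) U U :=
        (((Set.toFinite U).injOn_iff_bijOn_of_mapsTo hUmap).mp hUinj).surjOn
      have hY'δU : Y' δ ∈ U := ⟨hY'val δ, hY'tor δ⟩
      obtain ⟨w', hw'U, hw'⟩ := hUsurj hY'δU
      have hww' : w = w' := by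
        apply hδ.1
        show mact δ.1 w - w = mact δ.1 w' - w'
        rw [show mact δ.1 w' - w' = Y' δ from hw', ← hw δ]
      have hwU : w ∈ U := hww' ▸ hw'U
      obtain ⟨⟨yw, hywW, hyw⟩, _⟩ := hwU
      refine ⟨u₀ + w, ⟨yu + yw, hWadd _ _ hyuW hywW, by rw [smul_add, ← hu₀, ← hyw]⟩, ?_⟩
      intro a
      have h1 : Y a - (mact a.1 u₀ - u₀) = mact a.1 w - w := by
        rw [← hY'a]; exact hw a
      rw [sub_eq_iff_eq_add] at h1
      rw [h1, mact_add]
      abel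
  -- main argument
  obtain ⟨v₀, hv₀⟩ := hZH
  have hZ'c : ∀ a b : G, Z (a*b) - (mact (a*b).1 v₀ - v₀)
      = (Z a - (mact a.1 v₀ - v₀)) + mact a.1 (Z b - (mact b.1 v₀ - v₀)) :=
    twist Z v₀ hZ
  have hZ'H : ∀ h : G, h ∈ H → Z h - (mact h.1 v₀ - v₀) = 0 := by
    intro h hh
    rw [hv₀ h hh]
    abel
  -- values of Z - δ(v₀) are H-fixed
  have hZ'W : ∀ a : G, Z a - (mact a.1 v₀ - v₀) ∈ W := by
    intro a
    rw [hWmem]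
    intro h hh
    have e1 : Z (h * a) - (mact (h*a).1 v₀ - v₀)
        = mact h.1 (Z a - (mact a.1 v₀ - v₀)) := by
      rw [hZ'c h a, hZ'H h hh, zero_add]
    have e2 : Z (h * a) - (mact (h*a).1 v₀ - v₀) = Z a - (mact a.1 v₀ - v₀) := by
      have e : h * a = a * (a⁻¹ * h * a) := by group
      rw [e, hZ'c a _, hZ'H _ (hconj a h hh), mact_zero, add_zero]
    rw [← e1, e2]
  obtain ⟨v₁, -, hv₁⟩ := key n 0 (by omega) (fun a => Z a - (mact a.1 v₀ - v₀))
    (fun a b => hZ'c a b) (fun h hh => hZ'H h hh)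
    (fun a => ⟨Z a - (mact a.1 v₀ - v₀), hZ'W a, by rw [pow_zero, one_smul]⟩)
  refine ⟨v₀ + v₁, fun a => ?_⟩
  have h1 : Z a - (mact a.1 v₀ - v₀) = mact a.1 v₁ - v₁ := hv₁ a
  rw [sub_eq_iff_eq_add] at h1
  rw [h1, mact_add]
  abel
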